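/- Let $x_1, \ldots, x_m$ be i.i.d. standard normal random variables and let $0 < c < 1$ with $m c^2 < 1$. Then $\Pr[(c^2 - 1)x_1^2 + c^2 \sum_{i=2}^m x_i^2 \geq 0] \leq \sqrt{m e}\, c$, where $e$ is Euler's number. -/

import Mathlib

/-!
Chernoff bound: for `λ ≥ 0`, `P(Y ≥ 0) ≤ 𝔼[exp (λ Y)]` with `Y = ∑ aᵢ xᵢ²`, and by independence
together with `𝔼[exp (s x²)] = (1 - 2s)^{-1/2}` this expectation is `∏ (1 - 2λaᵢ)^{-1/2}`.
For the optimal `λ` the factor of `x₁` is `√m c`, and each of the other `m - 1` factors is at most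
`(1 + 1/(m-1))^{1/2}`, so that together they contribute at most `√e`.
-/

open MeasureTheory ProbabilityTheory Real

lemma gaussianPDFReal_zero_one_mul_exp_mul_sq (s x : ℝ) :
    gaussianPDFReal 0 1 x * rexp (s * x ^ 2) = (√(2 * π))⁻¹ * rexp (-(1 / 2 - s) * x ^ 2) := by
  rw [gaussianPDFReal_def, mul_assoc, ← exp_add]
  congr 2
  · simp
  · ring_nf
    simp

lemma integrable_exp_mul_sq_gaussianReal {s : ℝ} (hs : s < 1 / 2) :
    Integrable (fun x => rexp (s * x ^ 2)) (gaussianReal 0 1) := by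
  rw [gaussianReal_of_var_ne_zero _ one_ne_zero,
    integrable_withDensity_iff_integrable_smul' (measurable_gaussianPDF 0 1)
      (ae_of_all _ fun _ => gaussianPDF_lt_top)]
  simp only [toReal_gaussianPDF, smul_eq_mul, gaussianPDFReal_zero_one_mul_exp_mul_sq]
  exact (integrable_exp_neg_mul_sq (by linarith)).const_mul _

lemma integral_exp_mul_sq_gaussianReal {s : ℝ} (hs : s < 1 / 2) :
    ∫ x, rexp (s * x ^ 2) ∂gaussianReal 0 1 = (√(1 - 2 * s))⁻¹ := by
  have hb : 0 < 1 / 2 - s := by linarith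
  simp only [integral_gaussianReal_eq_integral_smul one_ne_zero, smul_eq_mul,
    gaussianPDFReal_zero_one_mul_exp_mul_sq]
  rw [integral_const_mul, integral_gaussian, ← sqrt_inv, ← sqrt_inv, ← sqrt_mul (by positivity)]
  congr 1
  field_simp

lemma measure_pi_gaussianReal_sum_mul_sq_nonneg_le {ι : Type*} [Fintype ι] (a : ι → ℝ) {t : ℝ}
    (ht : 0 ≤ t) (hta : ∀ i, t * a i < 1 / 2) :
    (Measure.pi fun _ : ι => gaussianReal 0 1) {x | 0 ≤ ∑ i, a i * x i ^ 2}
      ≤ ENNReal.ofReal (∏ i, (√(1 - 2 * (t * a i)))⁻¹) := by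
  set μ := Measure.pi fun _ : ι => gaussianReal 0 1
  have hexp (x : ι → ℝ) : rexp (t * ∑ i, a i * x i ^ 2) = ∏ i, rexp (t * a i * x i ^ 2) := by
    rw [← exp_sum, Finset.mul_sum]
    simp only [mul_assoc]
  have hint : Integrable (fun x : ι → ℝ => rexp (t * ∑ i, a i * x i ^ 2)) μ := by
    simp only [hexp]
    exact Integrable.fintype_prod fun i => integrable_exp_mul_sq_gaussianReal (hta i)
  have hmgf : mgf (fun x : ι → ℝ => ∑ i, a i * x i ^ 2) μ t = ∏ i, (√(1 - 2 * (t * a i)))⁻¹ := by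
    simp only [mgf, hexp]
    rw [integral_fintype_prod_eq_prod (fun i y => rexp (t * a i * y ^ 2))]
    exact Finset.prod_congr rfl fun i _ => integral_exp_mul_sq_gaussianReal (hta i)
  have hchernoff := measure_ge_le_exp_mul_mgf 0 ht hint
  rw [mul_zero, exp_zero, one_mul, hmgf] at hchernoff
  rw [← ofReal_measureReal]
  exact ENNReal.ofReal_le_ofReal hchernoff

lemma sum_update_const_mul_sq {ι : Type*} [Fintype ι] [DecidableEq ι] (i₀ : ι) (p q : ℝ)
    (x : ι → ℝ) :
    ∑ i, Function.update (fun _ => q) i₀ p i * x i ^ 2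
      = p * x i₀ ^ 2 + q * ∑ i ∈ Finset.univ \ {i₀}, x i ^ 2 := by
  rw [Finset.sum_eq_add_sum_sdiff_singleton_of_mem (Finset.mem_univ i₀), Finset.mul_sum,
    Function.update_self]
  congr 1
  exact Finset.sum_congr rfl fun i hi => by rw [Function.update_of_ne (by simpa using hi)]

lemma prod_comp_update_const {ι α M : Type*} [Fintype ι] [DecidableEq ι] [CommMonoid M]
    (f : α → M) (i₀ : ι) (p q : α) :
    ∏ i, f (Function.update (fun _ => q) i₀ p i) = f p * f q ^ (Fintype.card ι - 1) := by
  rw [← Function.comp_def f, Function.comp_update,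
    Finset.prod_update_of_mem (Finset.mem_univ i₀), Function.comp_def, Finset.prod_const,
    Finset.card_univ_sdiff, Finset.card_singleton]

lemma inv_sqrt_pow_le_sqrt_exp_one (n : ℕ) {u : ℝ} (hu : n / (n + 1) ≤ u) :
    (√u)⁻¹ ^ n ≤ √(rexp 1) := by
  rcases n.eq_zero_or_pos with rfl | hn
  · simp [one_le_exp zero_le_one]
  have hu0 : 0 < u := lt_of_lt_of_le (by positivity) hu
  have hinv : u⁻¹ ≤ 1 + (n : ℝ)⁻¹ := by
    calc u⁻¹ ≤ (n / (n + 1 : ℝ))⁻¹ := inv_anti₀ (by positivity) hu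
      _ = 1 + (n : ℝ)⁻¹ := by field_simp
  rw [le_sqrt (by positivity) (exp_pos 1).le]
  calc ((√u)⁻¹ ^ n) ^ 2 = u⁻¹ ^ n := by rw [← pow_mul, mul_comm, pow_mul, inv_pow, sq_sqrt hu0.le]
    _ ≤ (1 + (n : ℝ)⁻¹) ^ n := pow_le_pow_left₀ (by positivity) hinv n
    _ ≤ rexp 1 := one_add_inv_pow_le_exp

/-- The minimiser `λ` of the Chernoff bound `∏ (1 - 2λaᵢ)^{-1/2}` for `a = (c² - 1, c², …, c²)`. -/
noncomputable def chernoffParam (m : ℕ) (c : ℝ) : ℝ :=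
  (1 - m * c ^ 2) / (2 * m * c ^ 2 * (1 - c ^ 2))

section chernoffParam

variable {m : ℕ} {c : ℝ}

lemma chernoffParam_nonneg (hmc : m * c ^ 2 ≤ 1) (hc : c ^ 2 ≤ 1) : 0 ≤ chernoffParam m c :=
  div_nonneg (by linarith) (mul_nonneg (by positivity) (by linarith))

lemma one_sub_two_mul_chernoffParam_mul_sq_sub_one (hm : m ≠ 0) (hc0 : c ≠ 0)
    (hc : c ^ 2 ≠ 1) : 1 - 2 * (chernoffParam m c * (c ^ 2 - 1)) = (m * c ^ 2)⁻¹ := by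
  have : (1 : ℝ) - c ^ 2 ≠ 0 := sub_ne_zero.2 hc.symm
  unfold chernoffParam
  field_simp
  ring

lemma one_sub_two_mul_chernoffParam_mul_sq (hm : m ≠ 0) (hc0 : c ≠ 0) (hc : c ^ 2 ≠ 1) :
    1 - 2 * (chernoffParam m c * c ^ 2) = (m - 1) / (m * (1 - c ^ 2)) := by
  have : (1 : ℝ) - c ^ 2 ≠ 0 := sub_ne_zero.2 hc.symm
  unfold chernoffParam
  field_simp
  ring

lemma chernoffParam_mul_sq_lt (hm : 1 < m) (hc0 : c ≠ 0) (hc : c ^ 2 < 1) :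
    chernoffParam m c * c ^ 2 < 1 / 2 := by
  have hm' : (1 : ℝ) < m := by exact_mod_cast hm
  have hpos : (0 : ℝ) < (m - 1) / (m * (1 - c ^ 2)) := div_pos (by linarith) (by nlinarith)
  rw [← one_sub_two_mul_chernoffParam_mul_sq (by omega) hc0 hc.ne] at hpos
  linarith

lemma chernoffParam_bound (hm : 0 < m) (hc0 : 0 < c) (hc1 : c < 1) :
    (√(1 - 2 * (chernoffParam m c * (c ^ 2 - 1))))⁻¹
        * (√(1 - 2 * (chernoffParam m c * c ^ 2)))⁻¹ ^ (m - 1)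
      ≤ √(m * rexp 1) * c := by
  have hc : c ^ 2 < 1 := by nlinarith
  rw [one_sub_two_mul_chernoffParam_mul_sq_sub_one hm.ne' hc0.ne' hc.ne,
    one_sub_two_mul_chernoffParam_mul_sq hm.ne' hc0.ne' hc.ne, sqrt_inv, inv_inv,
    sqrt_mul (Nat.cast_nonneg m), sqrt_sq hc0.le, sqrt_mul (Nat.cast_nonneg m), mul_right_comm]
  gcongr
  obtain ⟨n, rfl⟩ : ∃ n, m = n + 1 := ⟨m - 1, by omega⟩
  refine inv_sqrt_pow_le_sqrt_exp_one n ?_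
  push_cast
  rw [add_sub_cancel_right]
  exact div_le_div_of_nonneg_left n.cast_nonneg (by nlinarith) (by nlinarith)

end chernoffParam

/-- For i.i.d. standard normals `x₁,…,x_m`, `0 < c < 1` with `m c² < 1`,
`Pr[(c²-1)x₁² + c² ∑_{i=2}^m x_i² ≥ 0] ≤ √(m e) c`. -/
theorem stmt2 (m : ℕ) (hm : 0 < m) (c : ℝ) (hc0 : 0 < c) (hc1 : c < 1)
    (hmc : (m : ℝ) * c ^ 2 < 1) :
    (Measure.pi fun _ : Fin m => gaussianReal 0 1)
      {x | 0 ≤ (c ^ 2 - 1) * x ⟨0, hm⟩ ^ 2 +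
            c ^ 2 * ∑ i ∈ Finset.univ \ {(⟨0, hm⟩ : Fin m)}, x i ^ 2}
      ≤ ENNReal.ofReal (Real.sqrt (m * Real.exp 1) * c) := by
  set i₀ : Fin m := ⟨0, hm⟩
  set a : Fin m → ℝ := Function.update (fun _ => c ^ 2) i₀ (c ^ 2 - 1)
  have hc : c ^ 2 < 1 := by nlinarith
  have ht := chernoffParam_nonneg hmc.le hc.le
  have hta (i : Fin m) : chernoffParam m c * a i < 1 / 2 := by
    rcases eq_or_ne i i₀ with rfl | hi
    · simp only [a, Function.update_self]
      nlinarith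
    · simp only [a, Function.update_of_ne hi]
      exact chernoffParam_mul_sq_lt (Fin.nontrivial_iff_two_le.1 (nontrivial_of_ne i i₀ hi))
        hc0.ne' hc
  rw [show {x : Fin m → ℝ | _} = {x | 0 ≤ ∑ i, a i * x i ^ 2} from
    Set.ext fun x => by simp only [a, sum_update_const_mul_sq]]
  calc _ ≤ ENNReal.ofReal (∏ i, (√(1 - 2 * (chernoffParam m c * a i)))⁻¹) :=
        measure_pi_gaussianReal_sum_mul_sq_nonneg_le a ht hta
    _ ≤ _ := by
      rw [prod_comp_update_const (fun b => (√(1 - 2 * (chernoffParam m c * b)))⁻¹),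
        Fintype.card_fin]
      exact ENNReal.ofReal_le_ofReal (chernoffParam_bound hm hc0 hc1)
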